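/- arXiv:1908.01635 — 5 statements merged into one kernel-verified Lean document; each statement's English description precedes it below -/
import Mathlib

section
/- Let φ be a NNIL-formula and let f : N → M be a monotonic map between two Kripke models N = (W,R,V) and M = (W',R',V'). Then for every point w ∈ W, if M, f(w) ⊨ φ then N, w ⊨ φ (NNIL-formulas are reflected, i.e. backwards preserved, by monotonic maps). -/
/-! ## Formulas of intuitionistic propositional logic -/

inductive Formula : Type
  | bot : Formula
  | var : ℕ → Formula
  | and : Formula → Formula → Formula
  | or  : Formula → Formula → Formula
  | imp : Formula → Formula → Formula
  deriving DecidableEq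

namespace Formula

def top : Formula := imp bot bot

def iff_ (φ ψ : Formula) : Formula := and (imp φ ψ) (imp ψ φ)

/-- `φ` contains no implication at all. -/
def noImp : Formula → Prop
  | bot => True
  | var _ => True
  | and φ ψ => noImp φ ∧ noImp ψ
  | or φ ψ => noImp φ ∧ noImp ψ
  | imp _ _ => False

/-- NNIL-formulas: no nesting of implications to the left. -/
def IsNNIL : Formula → Prop
  | bot => True
  | var _ => True
  | and φ ψ => IsNNIL φ ∧ IsNNIL ψ
  | or φ ψ => IsNNIL φ ∧ IsNNIL ψ
  | imp φ ψ => noImp φ ∧ IsNNIL ψ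

/-- `φ` is an `n`-formula: all its propositional variables are among `p_0, …, p_{n-1}`. -/
def varsBelow (n : ℕ) : Formula → Prop
  | bot => True
  | var p => p < n
  | and φ ψ => varsBelow n φ ∧ varsBelow n ψ
  | or φ ψ => varsBelow n φ ∧ varsBelow n ψ
  | imp φ ψ => varsBelow n φ ∧ varsBelow n ψ

/-- the propositional variable `p` occurs in the formula -/
def occurs (p : ℕ) : Formula → Prop
  | bot => False
  | var q => q = p
  | and φ ψ => occurs p φ ∨ occurs p ψ
  | or φ ψ => occurs p φ ∨ occurs p ψ
  | imp φ ψ => occurs p φ ∨ occurs p ψ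

/-- uniform substitution -/
def subst (σ : ℕ → Formula) : Formula → Formula
  | bot => bot
  | var p => σ p
  | and φ ψ => and (subst σ φ) (subst σ ψ)
  | or φ ψ => or (subst σ φ) (subst σ ψ)
  | imp φ ψ => imp (subst σ φ) (subst σ ψ)

end Formula

/-- finite conjunction (empty conjunction is ⊤) -/
def listAnd : List Formula → Formula
  | [] => Formula.top
  | φ :: l => Formula.and φ (listAnd l)

/-- finite disjunction (empty disjunction is ⊥) -/
def listOr : List Formula → Formula
  | [] => Formula.bot
  | φ :: l => Formula.or φ (listOr l)

/-! ## Kripke structures, models and satisfaction -/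

/-- raw Kripke structure: worlds, relation, Boolean valuation -/
structure KStruct where
  W : Type
  R : W → W → Prop
  V : W → ℕ → Bool

namespace KStruct

/-- a Kripke model: `R` is a partial order and `V` is persistent -/
def IsModel (M : KStruct) : Prop :=
  (∀ w, M.R w w) ∧
  (∀ w u v, M.R w u → M.R u v → M.R w v) ∧
  (∀ w u, M.R w u → M.R u w → w = u) ∧
  (∀ w u p, M.R w u → M.V w p = true → M.V u p = true)

/-- an `n`-model: a Kripke model whose valuation is restricted to the variables `p_0,…,p_{n-1}` -/
def IsNModel (M : KStruct) (n : ℕ) : Prop :=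
  M.IsModel ∧ ∀ w p, n ≤ p → M.V w p = false

/-- intuitionistic satisfaction -/
def sat (M : KStruct) : M.W → Formula → Prop
  | _, Formula.bot => False
  | w, Formula.var p => M.V w p = true
  | w, Formula.and φ ψ => M.sat w φ ∧ M.sat w ψ
  | w, Formula.or φ ψ => M.sat w φ ∨ M.sat w ψ
  | w, Formula.imp φ ψ => ∀ u, M.R w u → M.sat u φ → M.sat u ψ

/-- the submodel on a subset of the worlds -/
def restrict (M : KStruct) (S : Set M.W) : KStruct where
  W := S
  R := fun a b => M.R a.1 b.1
  V := fun a p => M.V a.1 p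

end KStruct

/-- monotonic map between Kripke structures: preserves the order and the colors -/
def Monotonic (M N : KStruct) (f : M.W → N.W) : Prop :=
  (∀ w u, M.R w u → N.R (f w) (f u)) ∧ (∀ w p, N.V (f w) p = M.V w p)

/-- p-morphism: a monotonic map satisfying the forth condition -/
def PMorphism (M N : KStruct) (f : M.W → N.W) : Prop :=
  Monotonic M N f ∧ ∀ w u', N.R (f w) u' → ∃ u, M.R w u ∧ f u = u'

/-- MR: the class of formulas reflected by monotonic maps between Kripke models -/
def MR (φ : Formula) : Prop :=
  ∀ (N M : KStruct), N.IsModel → M.IsModel →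
    ∀ f : N.W → M.W, Monotonic N M f → ∀ w : N.W, M.sat (f w) φ → N.sat w φ

/-- `r` is a root of `M` -/
def IsRoot (M : KStruct) (r : M.W) : Prop := ∀ w, M.R r w

/-- `M` is tree-like with root `r`: rooted, and each point has a finite,
linearly ordered set of predecessors -/
def IsTree (M : KStruct) (r : M.W) : Prop :=
  IsRoot M r ∧ (∀ w : M.W, {u | M.R u w}.Finite) ∧
  (∀ w u v : M.W, M.R u w → M.R v w → (M.R u v ∨ M.R v u))

/-- `u` is an immediate (proper) successor of `w` -/
def ImmSucc (M : KStruct) (w u : M.W) : Prop :=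
  M.R w u ∧ w ≠ u ∧ ∀ v, M.R w v → M.R v u → v = w ∨ v = u

/-- `S` carries a color-preserving submodel of `M` -/
def ColorPresSub (M : KStruct) (S : Set M.W) : Prop :=
  ∀ w ∈ S, ∀ u, M.R w u → ∃ v ∈ S, M.R w v ∧ ∀ p, M.V v p = M.V u p

/-! ## The β-formulas of finite models -/

/-- the variables among `p_0,…,p_{n-1}` true at `w` -/
def propList (M : KStruct) (n : ℕ) (w : M.W) : List Formula :=
  ((List.range n).filter (fun p => M.V w p)).map Formula.var

/-- the variables among `p_0,…,p_{n-1}` false at `w` -/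
def notpropList (M : KStruct) (n : ℕ) (w : M.W) : List Formula :=
  ((List.range n).filter (fun p => !(M.V w p))).map Formula.var

open Classical in
/-- the immediate successors of `w`, as a list -/
noncomputable def immSuccList (M : KStruct) [Fintype M.W] (w : M.W) : List M.W :=
  (Finset.univ.filter (fun u => ImmSucc M w u)).toList

/-- β(w), defined by recursion on the depth of `w` (computed with enough fuel):
`β(w) = ⋀prop(w) → (⋁notprop(w) ∨ β(w_1) ∨ … ∨ β(w_k))` where the `w_i` are the
immediate successors of `w` (for maximal `w` the last disjunct is the empty disjunction). -/
noncomputable def betaFuel (M : KStruct) [Fintype M.W] (n : ℕ) : ℕ → M.W → Formula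
  | 0, _ => Formula.bot
  | (k+1), w =>
      Formula.imp (listAnd (propList M n w))
        (listOr (notpropList M n w ++ (immSuccList M w).map (fun u => betaFuel M n k u)))

/-- β(w) for a point `w` of a finite `n`-model: `Fintype.card M.W` is an upper bound
for the depth of any point, so the recursion above never runs out of fuel. -/
noncomputable def beta (M : KStruct) [inst : Fintype M.W] (n : ℕ) (w : M.W) : Formula :=
  betaFuel M n (Fintype.card M.W) w

/-! ## Unravelings -/

/-- the unraveling `T_N` of a rooted model `(N, r)`: points are the finite sequences
`⟨r, w_1, …, w_k⟩` in which each entry is an immediate successor of the preceding one,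
ordered by the initial-segment relation; such a sequence satisfies the same variables
as its last entry. -/
def Unravel (M : KStruct) (r : M.W) : KStruct where
  W := {l : List M.W // l.head? = some r ∧ List.Chain' (ImmSucc M) l}
  R := fun σ τ => σ.1 <+: τ.1
  V := fun σ p => (σ.1.getLast?.map (fun w => M.V w p)).getD false

/-! ## Kripke frames -/

structure KFrame where
  W : Type
  R : W → W → Prop

namespace KFrame

/-- a Kripke frame: `R` is a partial order -/
def IsFrame (F : KFrame) : Prop :=
  (∀ w, F.R w w) ∧ (∀ w u v, F.R w u → F.R u v → F.R w v) ∧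
  (∀ w u, F.R w u → F.R u w → w = u)

def Persistent (F : KFrame) (V : F.W → ℕ → Bool) : Prop :=
  ∀ w u p, F.R w u → V w p = true → V u p = true

/-- the model on `F` given by a valuation -/
def model (F : KFrame) (V : F.W → ℕ → Bool) : KStruct := ⟨F.W, F.R, V⟩

/-- `F ⊨ φ` : `φ` is true at every point of every model on `F` -/
def valid (F : KFrame) (φ : Formula) : Prop :=
  ∀ V, F.Persistent V → ∀ w, (F.model V).sat w φ

/-- the substructure of `F` on a subset `S` of its domain, with the restricted order -/
def restrictF (F : KFrame) (S : Set F.W) : KFrame :=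
  ⟨S, fun a b => F.R a.1 b.1⟩

end KFrame

/-- a monotonic map from a model `N` into a frame `F` which is color-consistent:
`f(w) R f(u)` implies `col(w) ≤ col(u)` -/
def ColorConsistentMap (N : KStruct) (F : KFrame) (f : N.W → F.W) : Prop :=
  (∀ w u, N.R w u → F.R (f w) (f u)) ∧
  (∀ w u, F.R (f w) (f u) → ∀ p, N.V w p = true → N.V u p = true)




theorem noImp_sat_iff (N M : KStruct) (f : N.W → M.W) (hf : Monotonic N M f)
    (φ : Formula) (hφ : φ.noImp) (w : N.W) : M.sat (f w) φ ↔ N.sat w φ := by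
  induction φ with
  | bot => exact Iff.rfl
  | var p => simp [KStruct.sat, hf.2 w p]
  | and φ ψ ihφ ihψ =>
      exact and_congr (ihφ hφ.1) (ihψ hφ.2)
  | or φ ψ ihφ ihψ =>
      exact or_congr (ihφ hφ.1) (ihψ hφ.2)
  | imp φ ψ _ _ => exact absurd hφ id

/-- NNIL-formulas are reflected (backwards preserved) by monotonic maps. -/
theorem nnil_reflected_by_monotonic_maps
    (N M : KStruct) (hN : N.IsModel) (hM : M.IsModel)
    (f : N.W → M.W) (hf : Monotonic N M f)
    (φ : Formula) (hφ : φ.IsNNIL) (w : N.W)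
    (h : M.sat (f w) φ) : N.sat w φ := by
  induction φ generalizing w with
  | bot => exact h
  | var p => rw [KStruct.sat, ← hf.2]; exact h
  | and φ ψ ihφ ihψ => exact ⟨ihφ hφ.1 w h.1, ihψ hφ.2 w h.2⟩
  | or φ ψ ihφ ihψ =>
      rcases h with h | h
      · exact Or.inl (ihφ hφ.1 w h)
      · exact Or.inr (ihψ hφ.2 w h)
  | imp φ ψ _ ihψ =>
      intro u hru hu
      exact ihψ hφ.2 u (h (f u) (hf.1 w u hru)
        ((noImp_sat_iff N M f hf φ hφ.1 u).mpr hu))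
end

section
/- For any finite n-model N and any point w of N, the formula β(w) fails at w, i.e. N, w ⊭ β(w). -/
/-! β(w) is refuted at `w` itself, by induction on the fuel: `w` forces `⋀prop(w)` but none of the
disjuncts of the consequent. It forces no variable of `notprop(w)`, and if it forced some `β(w_i)`,
persistence would carry `β(w_i)` up to `w_i`, where it fails by induction. -/

namespace KStruct

variable {M : KStruct}

theorem IsModel.sat_of_R (hM : M.IsModel) {w u : M.W} (hwu : M.R w u) {φ : Formula}
    (hφ : M.sat w φ) : M.sat u φ := by
  induction φ generalizing w u with
  | bot => exact hφ
  | var p => exact hM.2.2.2 w u p hwu hφ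
  | and φ ψ ihφ ihψ => exact ⟨ihφ hwu hφ.1, ihψ hwu hφ.2⟩
  | or φ ψ ihφ ihψ => exact hφ.imp (ihφ hwu) (ihψ hwu)
  | imp φ ψ _ _ => exact fun v huv => hφ v (hM.2.1 w u v hwu huv)

theorem sat_top (w : M.W) : M.sat w Formula.top := fun _ _ h => h

theorem sat_listAnd {w : M.W} {l : List Formula} :
    M.sat w (listAnd l) ↔ ∀ φ ∈ l, M.sat w φ := by
  induction l with
  | nil => simpa [listAnd] using sat_top w
  | cons φ l ih => simp [listAnd, sat, ih]

theorem sat_listOr {w : M.W} {l : List Formula} :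
    M.sat w (listOr l) ↔ ∃ φ ∈ l, M.sat w φ := by
  induction l with
  | nil => simp [listOr, sat]
  | cons φ l ih => simp [listOr, sat, ih]

theorem sat_listAnd_propList (n : ℕ) (w : M.W) : M.sat w (listAnd (propList M n w)) := by
  simp only [sat_listAnd, propList, List.mem_map, List.mem_filter]
  rintro _ ⟨p, ⟨_, hp⟩, rfl⟩
  exact hp

theorem not_sat_of_mem_notpropList {n : ℕ} {w : M.W} {φ : Formula}
    (hφ : φ ∈ notpropList M n w) : ¬ M.sat w φ := by
  simp only [notpropList, List.mem_map, List.mem_filter] at hφ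
  obtain ⟨p, ⟨_, hp⟩, rfl⟩ := hφ
  simpa [sat] using hp

theorem R_of_mem_immSuccList [Fintype M.W] {w u : M.W} (hu : u ∈ immSuccList M w) :
    M.R w u := by
  simp only [immSuccList, Finset.mem_toList, Finset.mem_filter] at hu
  exact hu.2.1

theorem IsModel.not_sat_betaFuel [Fintype M.W] (hM : M.IsModel) (n : ℕ) :
    ∀ k (w : M.W), ¬ M.sat w (betaFuel M n k w)
  | 0, _ => id
  | k + 1, w => fun hβ => by
    obtain ⟨φ, hφ, hwφ⟩ := sat_listOr.mp (hβ w (hM.1 w) (sat_listAnd_propList n w))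
    rcases List.mem_append.mp hφ with hφ | hφ
    · exact not_sat_of_mem_notpropList hφ hwφ
    · obtain ⟨u, hu, rfl⟩ := List.mem_map.mp hφ
      exact hM.not_sat_betaFuel n k u (hM.sat_of_R (R_of_mem_immSuccList hu) hwφ)

end KStruct

/-- for any finite n-model `N` and any point `w`, `β(w)` fails at `w`. -/
theorem beta_fails_at_its_point (n : ℕ) (N : KStruct) [Fintype N.W]
    (hN : N.IsNModel n) (w : N.W) : ¬ N.sat w (beta N n w) :=
  hN.1.not_sat_betaFuel n _ w
end

section
/- Let M be an n-model and N a finite rooted n-model. Then β(N) fails at some point of M (M ⊭ β(N)) if and only if there exists a monotonic map from the unraveling T_N of N into M. -/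
/-! ## Auxiliary lemmas for Statement 2 -/

lemma sat_listAnd (M : KStruct) (u : M.W) (L : List Formula) :
    M.sat u (listAnd L) ↔ ∀ φ ∈ L, M.sat u φ := by
  induction L with
  | nil => simp [listAnd, Formula.top, KStruct.sat]
  | cons φ l ih => simp [listAnd, KStruct.sat, ih]

lemma sat_listOr (M : KStruct) (u : M.W) (L : List Formula) :
    M.sat u (listOr L) ↔ ∃ φ ∈ L, M.sat u φ := by
  induction L with
  | nil => simp [listOr, KStruct.sat]
  | cons φ l ih => simp [listOr, KStruct.sat, ih]

lemma sat_persist {M : KStruct} (hM : M.IsModel) (φ : Formula) :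
    ∀ w u, M.R w u → M.sat w φ → M.sat u φ := by
  induction φ with
  | bot => intro w u _ h; exact h
  | var p => intro w u hwu h; exact hM.2.2.2 w u p hwu h
  | and φ ψ ihφ ihψ => exact fun w u hwu h => ⟨ihφ w u hwu h.1, ihψ w u hwu h.2⟩
  | or φ ψ ihφ ihψ =>
      intro w u hwu h
      rcases h with h | h
      · exact Or.inl (ihφ w u hwu h)
      · exact Or.inr (ihψ w u hwu h)
  | imp φ ψ _ _ =>
      intro w u hwu h v huv hv
      exact h v (hM.2.1 w u v hwu huv) hv

lemma mem_immSuccList {N : KStruct} [Fintype N.W] {w u : N.W} :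
    u ∈ immSuccList N w ↔ ImmSucc N w u := by
  classical
  simp [immSuccList]

lemma chain'_length_le {N : KStruct} [Fintype N.W] (hN : N.IsModel) {l : List N.W}
    (h : l.Chain' (ImmSucc N)) : l.length ≤ Fintype.card N.W := by
  haveI : IsTrans N.W (fun a b => N.R a b ∧ a ≠ b) := by
    constructor
    intro a b c hab hbc
    refine ⟨hN.2.1 a b c hab.1 hbc.1, ?_⟩
    rintro rfl
    exact hab.2 (hN.2.2.1 a b hab.1 hbc.1)
  have hc : l.Chain' (fun a b => N.R a b ∧ a ≠ b) :=
    h.imp (fun a b hab => ⟨hab.1, hab.2.1⟩)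
  have hp : l.Pairwise (fun a b => N.R a b ∧ a ≠ b) := List.isChain_iff_pairwise.1 hc
  have hnd : l.Nodup := hp.imp (fun hab => hab.2)
  exact hnd.length_le_card

/-- the invariant maintained while constructing the monotonic map -/
def BInv (M N : KStruct) [Fintype N.W] (n k : ℕ) (w : N.W) (u : M.W) : Prop :=
  (∀ p, M.V u p = N.V w p) ∧
  ∀ w', ImmSucc N w w' → ¬ M.sat u (betaFuel N n k w')

lemma beta_step {M N : KStruct} [Fintype N.W] {n : ℕ} (hM : M.IsNModel n)
    (hN : N.IsNModel n) {k : ℕ} {w : N.W} {y : M.W}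
    (h : ¬ M.sat y (betaFuel N n (k + 1) w)) :
    ∃ u, M.R y u ∧ BInv M N n k w u := by
  simp only [betaFuel, KStruct.sat] at h
  push_neg at h
  obtain ⟨u, hyu, hA, hB⟩ := h
  rw [sat_listOr] at hB
  push_neg at hB
  refine ⟨u, hyu, ?_, ?_⟩
  · intro p
    by_cases hp : p < n
    · by_cases hv : N.V w p = true
      · have hmem : Formula.var p ∈ propList N n w :=
          List.mem_map.2 ⟨p, List.mem_filter.2 ⟨List.mem_range.2 hp, by simp [hv]⟩, rfl⟩
        have := (sat_listAnd M u _).1 hA _ hmem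
        simp only [KStruct.sat] at this
        rw [this, hv]
      · have hv' : N.V w p = false := by simpa using hv
        have hmem : Formula.var p ∈ notpropList N n w :=
          List.mem_map.2 ⟨p, List.mem_filter.2 ⟨List.mem_range.2 hp, by simp [hv']⟩, rfl⟩
        have hnot := hB (Formula.var p) (List.mem_append_left _ hmem)
        simp only [KStruct.sat] at hnot
        rw [hv']
        simpa using hnot
    · rw [hM.2 u p (le_of_not_gt hp), hN.2 w p (le_of_not_gt hp)]
  · intro w' hw' hsat
    exact hB (betaFuel N n k w')
      (List.mem_append_right _ (List.mem_map.2 ⟨w', mem_immSuccList.2 hw', rfl⟩)) hsat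

/-- the map on raw (reversed) sequences, built step by step with `Classical.epsilon` -/
noncomputable def buildAux (M N : KStruct) [Fintype N.W] (n : ℕ) (x₀ : M.W) :
    List N.W → M.W
  | [] => x₀
  | w :: t =>
      letI : Nonempty M.W := ⟨x₀⟩
      Classical.epsilon (fun u => M.R (buildAux M N n x₀ t) u ∧
        BInv M N n (Fintype.card N.W - (t.length + 1)) w u)

lemma buildAux_key {M N : KStruct} [Fintype N.W] {n : ℕ} (hM : M.IsNModel n)
    (hN : N.IsNModel n) (r : N.W) (x₀ : M.W)
    (hx₀ : ¬ M.sat x₀ (betaFuel N n (Fintype.card N.W) r)) :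
    ∀ (m : List N.W) (w : N.W), (m ++ [w]).head? = some r →
      List.Chain' (ImmSucc N) (m ++ [w]) →
      M.R (buildAux M N n x₀ m.reverse) (buildAux M N n x₀ (m ++ [w]).reverse) ∧
      BInv M N n (Fintype.card N.W - (m.length + 1)) w
        (buildAux M N n x₀ (m ++ [w]).reverse) := by
  haveI : Nonempty N.W := ⟨r⟩
  intro m
  induction m using List.reverseRecOn with
  | nil =>
      intro w h1 h2
      have hw : w = r := by simpa using h1
      subst hw
      have hcard : 1 ≤ Fintype.card N.W := Fintype.card_pos
      have hx₀' : ¬ M.sat x₀ (betaFuel N n ((Fintype.card N.W - 1) + 1) w) := by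
        rwa [Nat.sub_add_cancel hcard]
      have hex := beta_step hM hN hx₀'
      have hspec := Classical.epsilon_spec (p := fun u => M.R (buildAux M N n x₀ []) u ∧
        BInv M N n (Fintype.card N.W - (([] : List N.W).length + 1)) w u) (by
          simpa [buildAux] using hex)
      simpa [buildAux] using hspec
  | append_singleton m' w₁ ih =>
      intro w h1 h2
      have hne : m' ++ ([w₁] : List N.W) ≠ [] := by simp
      have h1' : (m' ++ [w₁]).head? = some r := by
        rwa [List.head?_append_of_ne_nil _ hne] at h1
      have h2' : List.Chain' (ImmSucc N) (m' ++ [w₁]) :=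
        h2.prefix ⟨[w], by simp⟩
      have hlink : ImmSucc N w₁ w := by
        have := (List.isChain_append.1 h2).2.2
        exact this w₁ (by simp) w (by simp)
      obtain ⟨hR1, hBInv1⟩ := ih w₁ h1' h2'
      have hlen : (m' ++ [w₁] ++ [w]).length ≤ Fintype.card N.W :=
        chain'_length_le hN.1 h2
      have hlen' : m'.length + 2 ≤ Fintype.card N.W := by
        simpa using hlen
      have heq : Fintype.card N.W - (m'.length + 1) =
          (Fintype.card N.W - (m'.length + 2)) + 1 := by omega
      have hnot : ¬ M.sat (buildAux M N n x₀ (m' ++ [w₁]).reverse)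
          (betaFuel N n ((Fintype.card N.W - (m'.length + 2)) + 1) w) := by
        rw [← heq]
        exact hBInv1.2 w hlink
      have hex := beta_step hM hN hnot
      have hrev : ((m' ++ [w₁]) ++ [w]).reverse = w :: (m' ++ [w₁]).reverse := by
        simp
      have hlen2 : Fintype.card N.W - ((m' ++ [w₁]).reverse.length + 1) =
          Fintype.card N.W - (m'.length + 2) := by
        simp
      have hspec := Classical.epsilon_spec
        (p := fun u => M.R (buildAux M N n x₀ (m' ++ [w₁]).reverse) u ∧
          BInv M N n (Fintype.card N.W - ((m' ++ [w₁]).reverse.length + 1)) w u) (by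
            rw [hlen2]; exact hex)
      rw [hrev]
      have hbd : buildAux M N n x₀ (w :: (m' ++ [w₁]).reverse) =
          letI : Nonempty M.W := ⟨x₀⟩
          Classical.epsilon (fun u => M.R (buildAux M N n x₀ (m' ++ [w₁]).reverse) u ∧
            BInv M N n (Fintype.card N.W - ((m' ++ [w₁]).reverse.length + 1)) w u) := rfl
      rw [hbd]
      constructor
      · exact hspec.1
      · have hlen4 : Fintype.card N.W - ((m' ++ [w₁]).length + 1) =
            Fintype.card N.W - ((m' ++ [w₁]).reverse.length + 1) := by simp
        rw [hlen4]
        exact hspec.2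

/-- `M ⊭ β(N)` iff there is a monotonic map from the unraveling `T_N`
of `N` into `M`. -/
theorem beta_refutation_via_monotonic_maps (n : ℕ) (M N : KStruct) [Fintype N.W]
    (hM : M.IsNModel n) (hN : N.IsNModel n) (r : N.W) (hr : IsRoot N r) :
    (¬ ∀ x : M.W, M.sat x (beta N n r)) ↔
      ∃ f : (Unravel N r).W → M.W, Monotonic (Unravel N r) M f := by
  constructor
  · intro h
    obtain ⟨x₀, hx₀⟩ := not_forall.1 h
    have hx₀' : ¬ M.sat x₀ (betaFuel N n (Fintype.card N.W) r) := hx₀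
    have key := buildAux_key hM hN r x₀ hx₀'
    refine ⟨fun σ => buildAux M N n x₀ σ.1.reverse, ?_, ?_⟩
    · -- order preservation
      intro σ τ hστ
      obtain ⟨t, ht⟩ := hστ
      have hσne : σ.1 ≠ [] := by
        intro hc
        have h2 := σ.2.1
        rw [hc] at h2
        simp at h2
      have main : ∀ t : List N.W, List.Chain' (ImmSucc N) (σ.1 ++ t) →
          (σ.1 ++ t).head? = some r →
          M.R (buildAux M N n x₀ σ.1.reverse) (buildAux M N n x₀ (σ.1 ++ t).reverse) := by
        intro t
        induction t using List.reverseRecOn with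
        | nil => intro _ _; simp; exact hM.1.1 _
        | append_singleton t' w ih =>
            intro hch hhd
            rw [← List.append_assoc] at hch hhd ⊢
            have hne : σ.1 ++ t' ≠ [] := by
              intro hc
              exact hσne (List.append_eq_nil_iff.1 hc).1
            have hch' : List.Chain' (ImmSucc N) (σ.1 ++ t') :=
              hch.prefix ⟨[w], by simp⟩
            have hhd' : (σ.1 ++ t').head? = some r := by
              rwa [List.head?_append_of_ne_nil _ hne] at hhd
            have hstep := (key (σ.1 ++ t') w hhd hch).1
            exact hM.1.2.1 _ _ _ (ih hch' hhd') hstep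
      show M.R (buildAux M N n x₀ σ.1.reverse) (buildAux M N n x₀ τ.1.reverse)
      rw [← ht]
      have hch : List.Chain' (ImmSucc N) (σ.1 ++ t) := by rw [ht]; exact τ.2.2
      have hhd : (σ.1 ++ t).head? = some r := by rw [ht]; exact τ.2.1
      exact main t hch hhd
    · -- colors
      intro σ p
      have hσne : σ.1 ≠ [] := by
        intro hc
        have h2 := σ.2.1
        rw [hc] at h2
        simp at h2
      rcases List.eq_nil_or_concat σ.1 with hnil | ⟨m, w, hmw⟩
      · exact absurd hnil hσne
      · simp only [List.concat_eq_append] at hmw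
        have hhd : (m ++ [w]).head? = some r := by rw [← hmw]; exact σ.2.1
        have hch : List.Chain' (ImmSucc N) (m ++ [w]) := by rw [← hmw]; exact σ.2.2
        have hBInv := (key m w hhd hch).2
        have hcol := hBInv.1 p
        show M.V (buildAux M N n x₀ σ.1.reverse) p = (Unravel N r).V σ p
        rw [hmw, hcol]
        simp [Unravel, hmw]
  · rintro ⟨f, hf⟩
    have refute : ∀ k (σ : (Unravel N r).W) (w : N.W), σ.1.getLast? = some w →
        ¬ M.sat (f σ) (betaFuel N n k w) := by
      intro k
      induction k with
      | zero => intro σ w _ h; exact h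
      | succ k ih =>
          intro σ w hlast hsat
          simp only [betaFuel, KStruct.sat] at hsat
          have hcolσ : ∀ p, M.V (f σ) p = N.V w p := by
            intro p
            rw [hf.2 σ p]
            simp [Unravel, hlast]
          have hA : M.sat (f σ) (listAnd (propList N n w)) := by
            rw [sat_listAnd]
            intro φ hφ
            obtain ⟨p, hpmem, rfl⟩ := List.mem_map.1 hφ
            have hpf := List.mem_filter.1 hpmem
            show M.V (f σ) p = true
            rw [hcolσ p]
            simpa using hpf.2
          have hB := hsat (f σ) (hM.1.1 _) hA
          rw [sat_listOr] at hB
          obtain ⟨φ, hmem, hφ⟩ := hB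
          rcases List.mem_append.1 hmem with h1 | h2
          · obtain ⟨p, hpmem, rfl⟩ := List.mem_map.1 h1
            have hpf := List.mem_filter.1 hpmem
            have hv : N.V w p = false := by simpa using hpf.2
            simp only [KStruct.sat] at hφ
            rw [hcolσ p, hv] at hφ
            simp at hφ
          · obtain ⟨w', hw', rfl⟩ := List.mem_map.1 h2
            have himm : ImmSucc N w w' := mem_immSuccList.1 hw'
            have hσne : σ.1 ≠ [] := by
              intro hc
              have h2 := σ.2.1
              rw [hc] at h2
              simp at h2
            have hσ' : (σ.1 ++ [w']).head? = some r ∧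
                List.Chain' (ImmSucc N) (σ.1 ++ [w']) := by
              constructor
              · rw [List.head?_append_of_ne_nil _ hσne]; exact σ.2.1
              · refine List.isChain_append.2 ⟨σ.2.2, List.isChain_singleton _, ?_⟩
                intro x hx y hy
                rw [hlast] at hx
                simp at hx hy
                exact hx ▸ hy ▸ himm
            set σ' : (Unravel N r).W := ⟨σ.1 ++ [w'], hσ'⟩ with hσ'def
            have hR : (Unravel N r).R σ σ' := ⟨[w'], rfl⟩
            have hRM : M.R (f σ) (f σ') := hf.1 σ σ' hR
            have hsat' : M.sat (f σ') (betaFuel N n k w') :=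
              sat_persist hM.1 _ _ _ hRM hφ
            exact ih σ' w' (by simp [hσ'def]) hsat'
    intro hall
    have hσ₀ : (([r] : List N.W).head? = some r) ∧ List.Chain' (ImmSucc N) [r] :=
      ⟨rfl, List.isChain_singleton r⟩
    exact refute (Fintype.card N.W) ⟨[r], hσ₀⟩ r rfl (hall _)
end

section
/- For every node T_w of the n-universal model T(n), every monotonic map f : T_w → T_w (from the finite tree T_w to itself) is the identity map. -/
/-! ## The n-universal model 𝒯(n) for NNIL -/

/-- an `n`-color -/
abbrev Col (n : ℕ) := Fin n → Bool

/-- componentwise order on colors -/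
def ColLE {n : ℕ} (c d : Col n) : Prop := ∀ i, c i = true → d i = true

def ColLT {n : ℕ} (c d : Col n) : Prop := ColLE c d ∧ c ≠ d

/-- finite colored trees: a root color together with the list of subtrees
hanging above the root -/
inductive CTree (n : ℕ) : Type
  | node : Col n → List (CTree n) → CTree n

namespace CTree

variable {n : ℕ}

def color : CTree n → Col n
  | node c _ => c

def children : CTree n → List (CTree n)
  | node _ ts => ts

/-- the subtree of `t` at a position (a list of child indices) -/
def subt : List ℕ → CTree n → Option (CTree n)
  | [], t => some t
  | i :: l, t => (t.children[i]?).bind (subt l)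

/-- the finite tree-like `n`-model determined by a colored tree: its worlds are
the positions of `t`, ordered by the initial-segment relation, and a position
satisfies `p_i` iff the color of the subtree there is `1` at `i`. -/
def toModel (t : CTree n) : KStruct where
  W := {l : List ℕ // (subt l t).isSome = true}
  R := fun a b => a.1 <+: b.1
  V := fun a p =>
    if h : p < n then ((subt a.1 t).map (fun s => s.color ⟨p, h⟩)).getD false
    else false

/-- the root of the model of a tree -/
def root (t : CTree n) : t.toModel.W := ⟨[], rfl⟩

/-- an injective code of colors -/
def colCode (c : Col n) : ℕ := ∑ i : Fin n, (if c i then 2 ^ (i : ℕ) else 0)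

/-- an injective code of lists of numbers -/
def listCode : List ℕ → ℕ
  | [] => 0
  | a :: l => Nat.pair a (listCode l) + 1

/-- an injective code of colored trees, used to order the children of every node of a
tree in the universal model canonically -/
def code : CTree n → ℕ
  | node c ts => Nat.pair (colCode c) (listCode (ts.attach.map (fun x => code x.1)))
decreasing_by
  have := List.sizeOf_lt_of_mem x.2
  simp only [CTree.node.sizeOf_spec]
  omega

end CTree

/-- `MLE s t` (`s ≤ t`): there is a monotonic map from (the model of) `t` into `s` -/
def MLE {n : ℕ} (s t : CTree n) : Prop :=
  ∃ f : t.toModel.W → s.toModel.W, Monotonic t.toModel s.toModel f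

/-- membership in the domain of the universal model `𝒯(n)`, built in layers:
layer 1 consists of the one-point trees (one for each color); a tree of a later layer
is built from a set `X` of pairwise `≤`-incomparable trees of earlier layers (encoded
as a list sorted canonically by `code`) by adding a fresh root below whose color is
strictly smaller than every color occurring in the trees of `X`. -/
inductive UMem : {n : ℕ} → CTree n → Prop
  | single {n : ℕ} (c : Col n) : UMem (CTree.node c [])
  | step {n : ℕ} (c : Col n) (ts : List (CTree n)) :
      ts ≠ [] →
      (∀ t ∈ ts, UMem t) →
      List.Chain' (fun a b => CTree.code a < CTree.code b) ts →
      (∀ t ∈ ts, ∀ s ∈ ts, t ≠ s → ¬ MLE t s) →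
      (∀ t ∈ ts, ∀ (l : List ℕ) (s : CTree n), CTree.subt l t = some s →
        ColLT c s.color) →
      UMem (CTree.node c ts)

/-- the universal model `𝒯(n)`: its points are the trees in `UMem`, ordered by `≤`
(where `T_w ≤ T_u` iff there is a monotonic map from `T_u` into `T_w`), and the color
of a node is the color of the root of the corresponding tree. -/
def UnivModel (n : ℕ) : KStruct where
  W := {t : CTree n // UMem t}
  R := fun a b => MLE a.1 b.1
  V := fun a p => if h : p < n then a.1.color ⟨p, h⟩ else false

/-- mutual monotonic mappability (`≡`) of Kripke structures -/
def MEquiv (A B : KStruct) : Prop :=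
  (∃ f : B.W → A.W, Monotonic B A f) ∧ (∃ g : A.W → B.W, Monotonic A B g)


namespace UnivAux

variable {n : ℕ}

lemma subt_cons_of_lt (c : Col n) (ts : List (CTree n)) (i : ℕ) (l : List ℕ)
    (hi : i < ts.length) :
    CTree.subt (i :: l) (CTree.node c ts) = CTree.subt l ts[i] := by
  show (ts[i]?).bind (CTree.subt l) = _
  rw [List.getElem?_eq_getElem hi]; rfl

lemma lt_length_of_isSome (c : Col n) (ts : List (CTree n)) (i : ℕ) (l : List ℕ)
    (h : (CTree.subt (i :: l) (CTree.node c ts)).isSome) : i < ts.length := by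
  by_contra h'
  rw [show CTree.subt (i :: l) (CTree.node c ts) = (ts[i]?).bind (CTree.subt l) from rfl,
    List.getElem?_eq_none (Nat.le_of_not_lt h')] at h
  simp at h

lemma V_congr (t : CTree n) (x y : t.toModel.W) (h : x.1 = y.1) (p : ℕ) :
    t.toModel.V x p = t.toModel.V y p := by
  cases x; cases y; cases h; rfl

lemma V_cons (c : Col n) (ts : List (CTree n)) (i : ℕ) (hi : i < ts.length) (l : List ℕ)
    (h1 : (CTree.subt (i :: l) (CTree.node c ts)).isSome)
    (h2 : (CTree.subt l ts[i]).isSome) (p : ℕ) :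
    (CTree.node c ts).toModel.V ⟨i :: l, h1⟩ p = (ts[i]).toModel.V ⟨l, h2⟩ p := by
  simp only [CTree.toModel, subt_cons_of_lt c ts i l hi]

lemma color_eq (t : CTree n) (x y : t.toModel.W) (sx sy : CTree n)
    (hx : CTree.subt x.1 t = some sx) (hy : CTree.subt y.1 t = some sy)
    (h : ∀ p, t.toModel.V x p = t.toModel.V y p) : sx.color = sy.color := by
  funext q
  have hq := h q.1
  simp only [CTree.toModel, hx, hy, Option.map_some, Option.getD_some, q.2, dif_pos] at hq
  exact hq

lemma main : ∀ (N : ℕ) (t : CTree n), sizeOf t < N → UMem t →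
    ∀ f : t.toModel.W → t.toModel.W, Monotonic t.toModel t.toModel f →
    ∀ x, f x = x := by
  intro N
  induction N with
  | zero => intro t h; omega
  | succ N ih =>
    intro t htN ht f hf x
    cases ht with
    | single c =>
      have hval : ∀ y : (CTree.node c ([] : List (CTree n))).toModel.W, y.1 = [] := by
        rintro ⟨(_ | ⟨i, l⟩), hl⟩
        · rfl
        · exact absurd (lt_length_of_isSome c [] i l hl) (by simp)
      exact Subtype.ext ((hval (f x)).trans (hval x).symm)
    | step c ts hne h2 h3 h4 h5 =>
      -- every non-root position has color strictly above c
      have hcolne : ∀ (z : (CTree.node c ts).toModel.W) (i : ℕ) (l : List ℕ),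
          z.1 = i :: l →
          ∃ s, CTree.subt z.1 (CTree.node c ts) = some s ∧ c ≠ s.color := by
        intro z i l hz
        have hz2 := z.2
        rw [hz] at hz2
        have hi := lt_length_of_isSome c ts i l hz2
        rw [subt_cons_of_lt c ts i l hi] at hz2
        obtain ⟨s, hs⟩ := Option.isSome_iff_exists.mp hz2
        refine ⟨s, ?_, (h5 ts[i] (List.getElem_mem hi) l s hs).2⟩
        rw [hz, subt_cons_of_lt c ts i l hi, hs]
      have hrootiff : ∀ z : (CTree.node c ts).toModel.W, (f z).1 = [] ↔ z.1 = [] := by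
        intro z
        constructor
        · intro hfz
          by_contra hzne
          obtain ⟨i, l, hil⟩ : ∃ i l, z.1 = i :: l := by
            cases hz1 : z.1 with
            | nil => exact absurd hz1 hzne
            | cons a b => exact ⟨a, b, rfl⟩
          obtain ⟨s, hs, hcs⟩ := hcolne z i l hil
          have hcol := color_eq _ (f z) z (CTree.node c ts) s
            (by rw [hfz]; rfl) hs (fun p => hf.2 z p)
          exact hcs hcol
        · intro hz
          by_contra hfz
          obtain ⟨i, l, hil⟩ : ∃ i l, (f z).1 = i :: l := by
            cases hz1 : (f z).1 with
            | nil => exact absurd hz1 hfz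
            | cons a b => exact ⟨a, b, rfl⟩
          obtain ⟨s, hs, hcs⟩ := hcolne (f z) i l hil
          have hcol := color_eq _ (f z) z s (CTree.node c ts)
            hs (by rw [hz]; rfl) (fun p => hf.2 z p)
          exact hcs hcol.symm
      cases hx1 : x.1 with
      | nil =>
        exact Subtype.ext (((hrootiff x).mpr hx1).trans hx1.symm)
      | cons i l =>
        have hx2 := x.2
        rw [hx1] at hx2
        have hi := lt_length_of_isSome c ts i l hx2
        rw [subt_cons_of_lt c ts i l hi] at hx2
        -- the point [i]
        have hximem : (CTree.subt [i] (CTree.node c ts)).isSome := by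
          rw [subt_cons_of_lt c ts i [] hi]; rfl
        set xi : (CTree.node c ts).toModel.W := ⟨[i], hximem⟩ with hxidef
        have hyne : (f xi).1 ≠ [] := by
          intro h
          have := (hrootiff xi).mp h
          simp [hxidef] at this
        obtain ⟨j, m, hym⟩ : ∃ j m, (f xi).1 = j :: m := by
          cases hz1 : (f xi).1 with
          | nil => exact absurd hz1 hyne
          | cons a b => exact ⟨a, b, rfl⟩
        have hj : j < ts.length := by
          have hy2 := (f xi).2
          rw [hym] at hy2
          exact lt_length_of_isSome c ts j m hy2
        -- every point above [i] maps to a point with head j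
        have hext : ∀ (l' : List ℕ) (h : (CTree.subt (i :: l') (CTree.node c ts)).isSome),
            ∃ m', (f ⟨i :: l', h⟩).1 = j :: m' := by
          intro l' h
          have hpre : (CTree.node c ts).toModel.R xi ⟨i :: l', h⟩ := ⟨l', rfl⟩
          obtain ⟨r, hr⟩ := hf.1 xi ⟨i :: l', h⟩ hpre
          exact ⟨m ++ r, by rw [← hr, hym]; rfl⟩
        have hFmem : ∀ z : (ts[i]).toModel.W,
            (CTree.subt (i :: z.1) (CTree.node c ts)).isSome := by
          intro z; rw [subt_cons_of_lt c ts i z.1 hi]; exact z.2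
        have hgmem : ∀ z : (ts[i]).toModel.W,
            (CTree.subt ((f ⟨i :: z.1, hFmem z⟩).1.tail) ts[j]).isSome := by
          intro z
          obtain ⟨m', hm'⟩ := hext z.1 (hFmem z)
          have h2' := (f ⟨i :: z.1, hFmem z⟩).2
          rw [hm'] at h2' ⊢
          rw [subt_cons_of_lt c ts j m' hj] at h2'
          exact h2'
        set g : (ts[i]).toModel.W → (ts[j]).toModel.W :=
          fun z => ⟨(f ⟨i :: z.1, hFmem z⟩).1.tail, hgmem z⟩ with hgdef
        have hgmono : Monotonic (ts[i]).toModel (ts[j]).toModel g := by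
          constructor
          · intro z z' hzz
            obtain ⟨a, ha⟩ := hext z.1 (hFmem z)
            obtain ⟨b, hb⟩ := hext z'.1 (hFmem z')
            have hpre : (f ⟨i :: z.1, hFmem z⟩).1 <+: (f ⟨i :: z'.1, hFmem z'⟩).1 := by
              apply hf.1
              obtain ⟨r, hr⟩ := hzz
              exact ⟨r, show (i :: z.1) ++ r = i :: z'.1 by rw [← hr]; rfl⟩
            show (f ⟨i :: z.1, hFmem z⟩).1.tail <+: (f ⟨i :: z'.1, hFmem z'⟩).1.tail
            rw [ha, hb] at hpre ⊢
            obtain ⟨r, hr⟩ := hpre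
            have hab : a ++ r = b := by simpa using hr
            exact ⟨r, hab⟩
          · intro z p
            obtain ⟨a, ha⟩ := hext z.1 (hFmem z)
            have hVf := hf.2 ⟨i :: z.1, hFmem z⟩ p
            have htl : (f ⟨i :: z.1, hFmem z⟩).1.tail = a := by rw [ha]; rfl
            have hamem : (CTree.subt a ts[j]).isSome := htl ▸ hgmem z
            have hjamem : (CTree.subt (j :: a) (CTree.node c ts)).isSome := by
              rw [subt_cons_of_lt c ts j a hj]; exact hamem
            calc (ts[j]).toModel.V (g z) p
                = (ts[j]).toModel.V ⟨a, hamem⟩ p := V_congr _ _ _ htl p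
              _ = (CTree.node c ts).toModel.V ⟨j :: a, hjamem⟩ p :=
                  (V_cons c ts j hj a hjamem hamem p).symm
              _ = (CTree.node c ts).toModel.V (f ⟨i :: z.1, hFmem z⟩) p :=
                  V_congr _ _ _ ha.symm p
              _ = (CTree.node c ts).toModel.V ⟨i :: z.1, hFmem z⟩ p := hVf
              _ = (ts[i]).toModel.V ⟨z.1, z.2⟩ p := V_cons c ts i hi z.1 (hFmem z) z.2 p
              _ = (ts[i]).toModel.V z p := rfl
        have hMLE : MLE ts[j] ts[i] := ⟨g, hgmono⟩
        have hts : ts[j] = ts[i] := by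
          by_contra hne'
          exact h4 ts[j] (List.getElem_mem hj) ts[i] (List.getElem_mem hi) hne' hMLE
        have hji : j = i := by
          have hchain : List.Chain' (· < ·) (ts.map CTree.code) :=
            (List.isChain_map _).mpr h3
          have hpw : List.Pairwise (· < ·) (ts.map CTree.code) :=
            List.isChain_iff_pairwise.mp hchain
          have hkey : ∀ a b (ha : a < ts.length) (hb : b < ts.length), a < b →
              CTree.code ts[a] < CTree.code ts[b] := by
            intro a b ha hb hab
            have := List.pairwise_iff_getElem.mp hpw a b (by simpa) (by simpa) hab
            simpa using this
          rcases lt_trichotomy j i with h | h | h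
          · have := hkey j i hj hi h; rw [hts] at this; omega
          · exact h
          · have := hkey i j hi hj h; rw [hts] at this; omega
        subst hji
        have hsz : sizeOf (ts[j]) < N := by
          have h1 : sizeOf (ts[j]) < sizeOf (CTree.node c ts) := by
            have := List.sizeOf_lt_of_mem (List.getElem_mem hj)
            simp only [CTree.node.sizeOf_spec]
            omega
          omega
        have hgid := ih ts[j] hsz (h2 _ (List.getElem_mem hj)) g hgmono
        have hz := hgid ⟨l, hx2⟩
        have htail : (f ⟨j :: l, hFmem ⟨l, hx2⟩⟩).1.tail = l := congrArg Subtype.val hz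
        obtain ⟨m', hm'⟩ := hext l (hFmem ⟨l, hx2⟩)
        have hml : m' = l := by rw [hm'] at htail; simpa using htail
        have hXx : (⟨j :: l, hFmem ⟨l, hx2⟩⟩ : (CTree.node c ts).toModel.W) = x :=
          Subtype.ext hx1.symm
        exact Subtype.ext (by rw [← hXx, hm', hml])

end UnivAux

/-- every monotonic self-map of a node `T_w` of the universal model
`𝒯(n)` is the identity. -/
theorem univ_node_monotonic_self_map_is_id (n : ℕ) (t : CTree n) (ht : UMem t)
    (f : t.toModel.W → t.toModel.W) (hf : Monotonic t.toModel t.toModel f) :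
    ∀ x, f x = x :=
  UnivAux.main (sizeOf t + 1) t (Nat.lt_succ_self _) ht f hf
end

section
/- If T_w and T_u are distinct nodes of the n-universal model T(n), then T_w ≢ T_u, i.e., it is not the case that there are monotonic maps both from T_w into T_u and from T_u into T_w. -/
/-! Mutual maps between nodes `t`, `s` of `𝒯(n)` force equal root colors, because the root color
of a node lies below every color of its tree. Every child of `s` has a color strictly above that
root color, so its image under the map into `t` avoids the root and lands in a child of `t`;
symmetrically for the children of `t`. The children of each node form an antichain, so any child of
`t` lies above a child of `s` which lies above a child of `t`, which must be itself; by induction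
these two children are then equal. Hence `t` and `s` have the same children, listed in the same
canonical order. -/

theorem List.eq_of_isChain_lt_of_mem_iff {α β : Type*} [Preorder β] {f : α → β}
    {l₁ l₂ : List α} (h₁ : l₁.IsChain (fun a b => f a < f b))
    (h₂ : l₂.IsChain (fun a b => f a < f b)) (h : ∀ a, a ∈ l₁ ↔ a ∈ l₂) : l₁ = l₂ :=
  haveI : Std.Irrefl (fun a b : α => f a < f b) := ⟨fun a => lt_irrefl (f a)⟩
  haveI : Std.Antisymm (fun a b : α => f a < f b) := ⟨fun _ _ hab hba => (lt_asymm hab hba).elim⟩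
  List.Pairwise.eq_of_mem_iff (List.isChain_iff_pairwise.1 h₁) (List.isChain_iff_pairwise.1 h₂) h

theorem Set.subset_of_isAntichain_of_forall_exists {α : Type*} {r : α → α → Prop} [IsTrans α r]
    {A B : Set α} (hA : IsAntichain r A) (hAB : ∀ a ∈ A, ∃ b ∈ B, r b a)
    (hBA : ∀ b ∈ B, ∃ a ∈ A, r a b) (heq : ∀ a ∈ A, ∀ b ∈ B, r a b → r b a → a = b) :
    A ⊆ B := by
  intro a ha
  obtain ⟨b, hb, hba⟩ := hAB a ha
  obtain ⟨a', ha', hab⟩ := hBA b hb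
  obtain rfl : a' = a := by
    by_contra hne
    exact hA ha' ha hne (_root_.trans hab hba)
  rwa [heq a' ha b hb hab hba]

theorem colLE_iff_le {n : ℕ} {c d : Col n} : ColLE c d ↔ c ≤ d := by
  simp only [ColLE, Pi.le_def, Bool.le_iff_imp]

theorem colLT_iff_lt {n : ℕ} {c d : Col n} : ColLT c d ↔ c < d := by
  rw [ColLT, colLE_iff_le, lt_iff_le_and_ne]

theorem Monotonic.comp {A B C : KStruct} {f : A.W → B.W} {g : B.W → C.W}
    (hf : Monotonic A B f) (hg : Monotonic B C g) : Monotonic A C (g ∘ f) :=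
  ⟨fun w u h => hg.1 _ _ (hf.1 w u h), fun w p => (hg.2 (f w) p).trans (hf.2 w p)⟩

theorem MLE.trans {n : ℕ} {a b c : CTree n} (hab : MLE a b) (hbc : MLE b c) : MLE a c :=
  let ⟨f, hf⟩ := hab
  let ⟨g, hg⟩ := hbc
  ⟨f ∘ g, hg.comp hf⟩

instance {n : ℕ} : IsTrans (CTree n) MLE := ⟨fun _ _ _ => MLE.trans⟩

namespace CTree

variable {n : ℕ}

theorem subt_append (p q : List ℕ) (t : CTree n) :
    subt (p ++ q) t = (subt p t).bind (subt q) := by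
  induction p generalizing t with
  | nil => rfl
  | cons i p ih =>
    simp only [List.cons_append, subt, ih]
    cases t.children[i]? <;> rfl

theorem subt_append_of_subt_eq_some {p : List ℕ} {t u : CTree n} (hu : subt p t = some u)
    (q : List ℕ) : subt (p ++ q) t = subt q u := by
  rw [subt_append, hu, Option.bind_some]

theorem toModel_V_eq_of_subt_eq {t u : CTree n} {w : t.toModel.W} {v : u.toModel.W}
    (h : subt w.1 t = subt v.1 u) (p : ℕ) : t.toModel.V w p = u.toModel.V v p := by
  simp only [toModel, h]

def colorAt (t : CTree n) (w : t.toModel.W) : Col n := fun i => t.toModel.V w i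

theorem colorAt_eq_color {t u : CTree n} {w : t.toModel.W} (h : subt w.1 t = some u) :
    colorAt t w = u.color := by
  funext i
  simp [colorAt, toModel, h]

theorem colorAt_root (t : CTree n) : colorAt t t.root = t.color :=
  colorAt_eq_color rfl

theorem colorAt_apply_of_monotonic {s t : CTree n} {f : s.toModel.W → t.toModel.W}
    (hf : Monotonic s.toModel t.toModel f) (w : s.toModel.W) :
    colorAt t (f w) = colorAt s w :=
  funext fun i => hf.2 w i

theorem mle_of_subt_eq_some {p : List ℕ} {t u : CTree n} (hu : subt p t = some u) :
    MLE t u := by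
  refine ⟨fun w => ⟨p ++ w.1, by rw [subt_append_of_subt_eq_some hu]; exact w.2⟩, ?_, ?_⟩
  · intro w v hwv
    exact (List.prefix_append_right_inj p).2 hwv
  · intro w i
    exact toModel_V_eq_of_subt_eq (subt_append_of_subt_eq_some hu w.1) i

theorem mle_of_mem_children {c : Col n} {ts : List (CTree n)} {u : CTree n} (hu : u ∈ ts) :
    MLE (node c ts) u := by
  obtain ⟨i, hi, rfl⟩ := List.getElem_of_mem hu
  exact mle_of_subt_eq_some (p := [i]) (by simp [subt, children, hi])

/-- If the root goes above position `p`, so does everything, and the map factors through the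
subtree at `p`. -/
theorem mle_of_prefix_root {s t u : CTree n} {f : s.toModel.W → t.toModel.W}
    (hf : Monotonic s.toModel t.toModel f) {p : List ℕ} (hu : subt p t = some u)
    (hp : p <+: (f s.root).1) : MLE u s := by
  have hpf : ∀ w, p ++ (f w).1.drop p.length = (f w).1 := fun w =>
    List.prefix_iff_eq_append.1 (hp.trans (hf.1 _ _ List.nil_prefix))
  have hsubt : ∀ w, subt (f w).1 t = subt ((f w).1.drop p.length) u := fun w => by
    rw [← subt_append_of_subt_eq_some hu, hpf]
  refine ⟨fun w => ⟨(f w).1.drop p.length, (hsubt w).symm ▸ (f w).2⟩, ?_, ?_⟩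
  · intro w v hwv
    exact (hf.1 w v hwv).drop p.length
  · intro w i
    rw [← hf.2 w i]
    exact (toModel_V_eq_of_subt_eq (hsubt w) i).symm

theorem exists_mem_mle_of_mle_of_color_ne {c : Col n} {ts : List (CTree n)} {s : CTree n}
    (h : MLE (node c ts) s) (hc : s.color ≠ c) : ∃ u ∈ ts, MLE u s := by
  obtain ⟨f, hf⟩ := h
  obtain ⟨i, l, hil⟩ : ∃ i l, (f s.root).1 = i :: l := by
    match hfr : (f s.root).1 with
    | [] =>
      refine (hc ?_).elim
      rw [← colorAt_root, ← colorAt_apply_of_monotonic hf,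
        colorAt_eq_color (u := node c ts) (by rw [hfr]; rfl)]
      rfl
    | i :: l => exact ⟨i, l, rfl⟩
  have hi : i < ts.length := by
    by_contra hi
    have := (f s.root).2
    simp [hil, subt, children, hi] at this
  exact ⟨ts[i], List.getElem_mem hi,
    mle_of_prefix_root hf (p := [i]) (by simp [subt, children, hi]) (by simp [hil])⟩

end CTree

open CTree

namespace UMem

variable {n : ℕ} {c : Col n} {ts : List (CTree n)}

theorem of_mem_children (h : UMem (node c ts)) {t : CTree n} (ht : t ∈ ts) : UMem t := by
  cases h with
  | single => simp at ht
  | step _ _ _ hU => exact hU t ht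

theorem isChain_code (h : UMem (node c ts)) : ts.IsChain (fun a b => a.code < b.code) := by
  cases h with
  | single => exact List.isChain_nil
  | step _ _ _ _ hchain => exact hchain

theorem isAntichain (h : UMem (node c ts)) : IsAntichain MLE {t | t ∈ ts} := by
  cases h with
  | single => simp
  | step _ _ _ _ _ hanti => exact fun t ht s hs hne => hanti t ht s hs hne

theorem color_lt_of_subt (h : UMem (node c ts)) {t : CTree n} (ht : t ∈ ts) {l : List ℕ}
    {u : CTree n} (hu : subt l t = some u) : c < u.color := by
  cases h with
  | single => simp at ht
  | step _ _ _ _ _ _ hcol => exact colLT_iff_lt.1 (hcol t ht l u hu)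

theorem color_le_colorAt {t : CTree n} (h : UMem t) (w : t.toModel.W) :
    t.color ≤ colorAt t w := by
  obtain ⟨u, hu⟩ := Option.isSome_iff_exists.1 w.2
  rw [colorAt_eq_color hu]
  match t, w, hu with
  | _, ⟨[], _⟩, rfl => exact le_rfl
  | node c ts, ⟨i :: l, _⟩, hu =>
    obtain ⟨v, hv, hvu⟩ : ∃ v, ts[i]? = some v ∧ subt l v = some u :=
      Option.bind_eq_some_iff.1 hu
    exact (h.color_lt_of_subt (List.mem_of_getElem? hv) hvu).le

theorem color_le_of_mle {t s : CTree n} (h : UMem t) (hts : MLE t s) : t.color ≤ s.color := by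
  obtain ⟨f, hf⟩ := hts
  simpa only [colorAt_apply_of_monotonic hf, colorAt_root] using h.color_le_colorAt (f s.root)

theorem exists_mem_mle_of_mle {ts' : List (CTree n)} (hs : UMem (node c ts'))
    (hts : MLE (node c ts) (node c ts')) : ∀ u ∈ ts', ∃ v ∈ ts, MLE v u := fun _ hu =>
  exists_mem_mle_of_mle_of_color_ne (hts.trans (mle_of_mem_children hu))
    (hs.color_lt_of_subt hu (l := []) rfl).ne'

theorem eq_of_mle_of_mle : ∀ {t s : CTree n}, UMem t → UMem s → MLE t s → MLE s t → t = s
  | node c ts, node c' ts', ht, hs, hts, hst => by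
    obtain rfl : c = c' := le_antisymm (ht.color_le_of_mle hts) (hs.color_le_of_mle hst)
    have ih : ∀ a ∈ ts, ∀ b ∈ ts', MLE a b → MLE b a → a = b := fun a ha b hb hab hba =>
      eq_of_mle_of_mle (ht.of_mem_children ha) (hs.of_mem_children hb) hab hba
    have hsub := Set.subset_of_isAntichain_of_forall_exists ht.isAntichain
      (ht.exists_mem_mle_of_mle hst) (hs.exists_mem_mle_of_mle hts) ih
    have hsub' := Set.subset_of_isAntichain_of_forall_exists hs.isAntichain
      (hs.exists_mem_mle_of_mle hts) (ht.exists_mem_mle_of_mle hst)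
      (fun b hb a ha hba hab => (ih a ha b hb hab hba).symm)
    rw [List.eq_of_isChain_lt_of_mem_iff ht.isChain_code hs.isChain_code
      fun a => ⟨@hsub a, @hsub' a⟩]
termination_by t s => sizeOf t + sizeOf s
decreasing_by
  all_goals
    have := List.sizeOf_lt_of_mem ‹_ ∈ ts›
    have := List.sizeOf_lt_of_mem ‹_ ∈ ts'›
    simp only [node.sizeOf_spec]
    omega

end UMem

/-- distinct nodes of the universal model `𝒯(n)` are not `≡`-equivalent:
there are no monotonic maps in both directions between them. -/
theorem univ_nodes_distinct_not_equiv (n : ℕ) (t s : CTree n)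
    (ht : UMem t) (hs : UMem s) (hne : t ≠ s) :
    ¬ (MLE t s ∧ MLE s t) :=
  fun ⟨hts, hst⟩ => hne (ht.eq_of_mle_of_mle hs hts hst)
end
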